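/- Let n, N, N̂, m, T be positive integers and δ ≥ 0, π > 0, λ ∈ (0,1], 0 < γ₁ < γ₂ real numbers with (1 + 1/π)·‖√P‖²·δ ≤ γ₂(1−λ). Let A (n×N), B (n×N̂) be real matrices and R₀T (N×T), G₀T (N̂×T), U₀T (m×T), W₀T (n×T), X₁T (n×T) real data matrices with X₁T = A·R₀T + B·G₀T + W₀T and every column w of W₀T satisfying wᵀw ≤ δ. Let P be a real n×n positive definite matrix, and let L : ℝⁿ → ℝ^{N×n}, G : ℝⁿ → ℝ^{N̂×m}, H : ℝⁿ → ℝ^{T×n}, α : ℝⁿ → (0,∞) be functions such that for every x ∈ ℝⁿ: R₀T·H(x) = L(x)·P⁻¹. Let X₀, X₁ ⊆ ℝⁿ satisfy xᵀPx ≤ γ₁ for all x ∈ X₀ and xᵀPx ≥ γ₂ for all x ∈ X₁, and assume for every x in X̃ := {x ∈ ℝⁿ : xᵀPx < γ₂} the block matrix [[−λP⁻¹, 0, 0], [0, 0, R̃(x)·H(x)], [0, (R̃(x)·H(x))ᵀ, −(1+π)⁻¹P⁻¹]] − α(x)·[[X₁T·X₁Tᵀ − TδIₙ, −X₁T·R̂ᵀ,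 0], [−R̂·X₁Tᵀ, R̂·R̂ᵀ, 0], [0, 0, 0]] is negative semidefinite, where R̃(x) := [R₀T; G(x)·U₀T] and R̂ := [R₀T; G₀T]. Then B(x) := xᵀPx is a robust control barrier certificate with ρ = (1 + 1/π)‖√P‖²: B(x) ≤ γ₁ on X₀, B(x) ≥ γ₂ on X₁, and for every x ∈ X̃ the input u(x) := (U₀T·H(x)·P)·x satisfies, for every w ∈ ℝⁿ with wᵀw ≤ δ, B(A·(L(x)·x) + B·(G(x)·u(x)) + w) ≤ λ·B(x) + ρ·wᵀw. -/

import Mathlib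

open Matrix

/-- A real matrix is negative semidefinite if it is symmetric and
`vᵀ M v ≤ 0` for all real vectors `v`. -/
def Matrix.NegSemidef {k : Type*} [Fintype k] (M : Matrix k k ℝ) : Prop :=
  M.IsSymm ∧ ∀ v : k → ℝ, v ⬝ᵥ M.mulVec v ≤ 0

/-- The positive semidefinite square root, with its definition from the older Mathlib
(removed since in favour of `CFC.sqrt`). -/
noncomputable def Matrix.PosSemidef.sqrt {n : Type*} [Fintype n]
    [DecidableEq n] {A : Matrix n n ℝ} (hA : A.PosSemidef) : Matrix n n ℝ :=
  hA.1.eigenvectorUnitary.1 * diagonal ((↑) ∘ Real.sqrt ∘ hA.1.eigenvalues) *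
    (star hA.1.eigenvectorUnitary : Matrix n n ℝ)

/-- The `ℓ² → ℓ²` operator norm of a real square matrix. -/
noncomputable def l2OpNorm {n : ℕ} (M : Matrix (Fin n) (Fin n) ℝ) : ℝ :=
  ‖Matrix.toEuclideanCLM (𝕜 := ℝ) M‖

/-!
Testing the LMI on vectors `(a, [A B]ᵀa, c)` turns its `α`-block into
`α (‖W₀Tᵀa‖² - Tδ‖a‖²)`, which is `≤ 0` because `X₁T - [A B] R̂ = W₀T` has columns of energy
at most `δ`; what is left is `2 aᵀ[A B]M(x)c ≤ λ aᵀP⁻¹a + (1+π)⁻¹ cᵀP⁻¹c` with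
`M(x) = R̃(x) H(x)`. Since `R₀T H(x) = L(x) P⁻¹`, the disturbance-free successor is
`z = [A B] M(x) P x`, and the choice `a = λ⁻¹Pz`, `c = Px` gives `(1+π) zᵀPz ≤ λ xᵀPx`.
Young's inequality `(z+w)ᵀP(z+w) ≤ (1+π) zᵀPz + (1+1/π) wᵀPw` and
`wᵀPw = ‖√P w‖² ≤ ‖√P‖² wᵀw` finish the proof.
-/

namespace Matrix.PosSemidef

variable {ι : Type*} [Fintype ι] [DecidableEq ι] {P : Matrix ι ι ℝ}

lemma sqrt_mul_self (hP : P.PosSemidef) : hP.sqrt * hP.sqrt = P := by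
  have hU : star (hP.1.eigenvectorUnitary : Matrix ι ι ℝ) *
      (hP.1.eigenvectorUnitary : Matrix ι ι ℝ) = 1 :=
    (mem_unitaryGroup_iff').1 hP.1.eigenvectorUnitary.2
  have hspectral := hP.1.spectral_theorem
  rw [Unitary.conjStarAlgAut_apply] at hspectral
  refine Eq.trans ?_ hspectral.symm
  simp only [Matrix.PosSemidef.sqrt, Matrix.mul_assoc]
  rw [← Matrix.mul_assoc (star _), hU, Matrix.one_mul, ← Matrix.mul_assoc (diagonal _),
    diagonal_mul_diagonal]
  congr 3
  funext i
  simp [Real.mul_self_sqrt (hP.eigenvalues_nonneg i)]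

lemma transpose_sqrt (hP : P.PosSemidef) : hP.sqrtᵀ = hP.sqrt := by
  rw [← conjTranspose_eq_transpose_of_trivial]
  simp [Matrix.PosSemidef.sqrt, Matrix.mul_assoc, star_eq_conjTranspose]

end Matrix.PosSemidef

lemma mulVec_dotProduct_self_le_l2OpNorm_sq {n : ℕ} (S : Matrix (Fin n) (Fin n) ℝ)
    (v : Fin n → ℝ) : (S *ᵥ v) ⬝ᵥ (S *ᵥ v) ≤ l2OpNorm S ^ 2 * (v ⬝ᵥ v) := by
  have normSq (u : Fin n → ℝ) : ‖WithLp.toLp 2 u‖ ^ 2 = u ⬝ᵥ u := by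
    rw [EuclideanSpace.real_norm_sq_eq]
    simp [dotProduct, sq]
  have hle := (toEuclideanCLM (𝕜 := ℝ) S).le_opNorm (WithLp.toLp 2 v)
  rw [toEuclideanCLM_toLp] at hle
  rw [← normSq, ← normSq, l2OpNorm, ← mul_pow]
  gcongr

lemma Matrix.PosSemidef.dotProduct_mulVec_le_l2OpNorm_sqrt_sq {n : ℕ}
    {P : Matrix (Fin n) (Fin n) ℝ} (hP : P.PosSemidef) (w : Fin n → ℝ) :
    w ⬝ᵥ P *ᵥ w ≤ l2OpNorm hP.sqrt ^ 2 * (w ⬝ᵥ w) := by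
  calc w ⬝ᵥ P *ᵥ w = w ⬝ᵥ hP.sqrt *ᵥ (hP.sqrt *ᵥ w) := by rw [mulVec_mulVec, hP.sqrt_mul_self]
    _ = (hP.sqrt *ᵥ w) ⬝ᵥ (hP.sqrt *ᵥ w) := by
      rw [dotProduct_mulVec, ← mulVec_transpose, hP.transpose_sqrt, dotProduct_comm]
    _ ≤ l2OpNorm hP.sqrt ^ 2 * (w ⬝ᵥ w) := mulVec_dotProduct_self_le_l2OpNorm_sq _ w

lemma Matrix.PosSemidef.dotProduct_mulVec_add_le {ι : Type*} [Fintype ι] {P : Matrix ι ι ℝ}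
    (hP : P.PosSemidef) {π : ℝ} (hπ : 0 < π) (z w : ι → ℝ) :
    (z + w) ⬝ᵥ P *ᵥ (z + w) ≤ (1 + π) * (z ⬝ᵥ P *ᵥ z) + (1 + 1 / π) * (w ⬝ᵥ P *ᵥ w) := by
  have hsymm : w ⬝ᵥ P *ᵥ z = z ⬝ᵥ P *ᵥ w := by
    rw [dotProduct_mulVec, ← mulVec_transpose, (isHermitian_iff_isSymm.1 hP.1).eq,
      dotProduct_comm]
  have hnonneg := hP.dotProduct_mulVec_nonneg (π • z - w)
  simp only [star_trivial, mulVec_sub, mulVec_smul, sub_dotProduct, dotProduct_sub,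
    smul_dotProduct, dotProduct_smul, smul_eq_mul, hsymm] at hnonneg
  have hexpand : (z + w) ⬝ᵥ P *ᵥ (z + w) =
      z ⬝ᵥ P *ᵥ z + 2 * (z ⬝ᵥ P *ᵥ w) + w ⬝ᵥ P *ᵥ w := by
    simp only [mulVec_add, add_dotProduct, dotProduct_add, hsymm]
    ring
  have hyoung : 2 * (z ⬝ᵥ P *ᵥ w) ≤ π * (z ⬝ᵥ P *ᵥ z) + 1 / π * (w ⬝ᵥ P *ᵥ w) := by
    rw [← mul_le_mul_iff_right₀ hπ]
    field_simp
    linarith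
  rw [hexpand]
  linarith

lemma transpose_mulVec_dotProduct_self_le {ι τ : Type*} [Fintype ι] [Fintype τ]
    {W : Matrix ι τ ℝ} {δ : ℝ} (hW : ∀ k, (fun i => W i k) ⬝ᵥ (fun i => W i k) ≤ δ)
    (a : ι → ℝ) : (Wᵀ *ᵥ a) ⬝ᵥ (Wᵀ *ᵥ a) ≤ Fintype.card τ * δ * (a ⬝ᵥ a) := by
  have ha : 0 ≤ a ⬝ᵥ a := Finset.sum_nonneg fun i _ => mul_self_nonneg (a i)
  have hcol (k : τ) : (Wᵀ *ᵥ a) k * (Wᵀ *ᵥ a) k ≤ δ * (a ⬝ᵥ a) := by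
    have hcs : ((fun i => W i k) ⬝ᵥ a) ^ 2 ≤
        ((fun i => W i k) ⬝ᵥ (fun i => W i k)) * (a ⬝ᵥ a) := by
      simpa only [dotProduct, sq] using
        Finset.sum_mul_sq_le_sq_mul_sq Finset.univ (fun i => W i k) a
    calc (Wᵀ *ᵥ a) k * (Wᵀ *ᵥ a) k = ((fun i => W i k) ⬝ᵥ a) ^ 2 := (sq _).symm
      _ ≤ δ * (a ⬝ᵥ a) := hcs.trans (mul_le_mul_of_nonneg_right (hW k) ha)
  calc (Wᵀ *ᵥ a) ⬝ᵥ (Wᵀ *ᵥ a) ≤ ∑ _k : τ, δ * (a ⬝ᵥ a) := Finset.sum_le_sum fun k _ => hcol k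
    _ = Fintype.card τ * δ * (a ⬝ᵥ a) := by simp [mul_assoc]

lemma dotProduct_mul_mulVec {ι κ τ : Type*} [Fintype ι] [Fintype κ] [Fintype τ] (u : ι → ℝ)
    (M : Matrix ι τ ℝ) (N : Matrix τ κ ℝ) (v : κ → ℝ) :
    u ⬝ᵥ (M * N) *ᵥ v = (Mᵀ *ᵥ u) ⬝ᵥ (N *ᵥ v) := by
  rw [← mulVec_mulVec, dotProduct_mulVec u M, ← mulVec_transpose]

lemma two_mul_dotProduct_mul_mulVec_le_of_negSemidef {ι ρ σ τ : Type*} [Fintype ι]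
    [DecidableEq ι] [Fintype ρ] [Fintype σ] [Fintype τ] {Q₁ : Matrix ι ι ℝ} {Q₂ : Matrix σ σ ℝ}
    {M : Matrix ρ σ ℝ} {F : Matrix ι ρ ℝ} {R : Matrix ρ τ ℝ} {W X : Matrix ι τ ℝ} {δ α : ℝ}
    (hX : X = F * R + W) (hW : ∀ k, (fun i => W i k) ⬝ᵥ (fun i => W i k) ≤ δ) (hα : 0 ≤ α)
    (hLMI : NegSemidef
      (fromBlocks (-Q₁) (fromCols (0 : Matrix ι ρ ℝ) (0 : Matrix ι σ ℝ))
          (fromRows (0 : Matrix ρ ι ℝ) (0 : Matrix σ ι ℝ)) (fromBlocks 0 M Mᵀ (-Q₂))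
        - α • fromBlocks (X * Xᵀ - ((Fintype.card τ : ℝ) * δ) • 1)
          (fromCols (-(X * Rᵀ)) (0 : Matrix ι σ ℝ)) (fromRows (-(R * Xᵀ)) (0 : Matrix σ ι ℝ))
          (fromBlocks (R * Rᵀ) 0 0 (0 : Matrix σ σ ℝ))))
    (a : ι → ℝ) (c : σ → ℝ) :
    2 * (a ⬝ᵥ (F * M) *ᵥ c) ≤ a ⬝ᵥ Q₁ *ᵥ a + c ⬝ᵥ Q₂ *ᵥ c := by
  have h := hLMI.2 (Sum.elim a (Sum.elim (Fᵀ *ᵥ a) c))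
  simp only [sub_mulVec, smul_mulVec, fromBlocks_mulVec, fromCols_mulVec_sumElim,
    fromRows_mulVec, sumElim_dotProduct_sumElim, dotProduct_sub, dotProduct_smul,
    dotProduct_add, zero_mulVec, dotProduct_zero, neg_mulVec, dotProduct_neg, smul_eq_mul,
    add_zero, zero_add, Sum.elim_comp_inl, Sum.elim_comp_inr, one_mulVec] at h
  have hcross : (Fᵀ *ᵥ a) ⬝ᵥ M *ᵥ c = a ⬝ᵥ (F * M) *ᵥ c := by
    rw [← mulVec_mulVec, dotProduct_mulVec a F, mulVec_transpose]
  have hcross_symm : c ⬝ᵥ Mᵀ *ᵥ (Fᵀ *ᵥ a) = (Fᵀ *ᵥ a) ⬝ᵥ M *ᵥ c := by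
    rw [mulVec_transpose, dotProduct_comm, ← dotProduct_mulVec]
  have hresidual : Xᵀ *ᵥ a - Rᵀ *ᵥ (Fᵀ *ᵥ a) = Wᵀ *ᵥ a := by
    rw [mulVec_mulVec, ← transpose_mul, hX, transpose_add, add_mulVec, add_sub_cancel_left]
  have hdata : a ⬝ᵥ (X * Xᵀ) *ᵥ a - Fintype.card τ * δ * (a ⬝ᵥ a) +
      -(a ⬝ᵥ (X * Rᵀ) *ᵥ (Fᵀ *ᵥ a)) +
      (-((Fᵀ *ᵥ a) ⬝ᵥ (R * Xᵀ) *ᵥ a) + (Fᵀ *ᵥ a) ⬝ᵥ (R * Rᵀ) *ᵥ (Fᵀ *ᵥ a)) =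
      (Wᵀ *ᵥ a) ⬝ᵥ (Wᵀ *ᵥ a) - Fintype.card τ * δ * (a ⬝ᵥ a) := by
    rw [← hresidual]
    simp only [dotProduct_mul_mulVec, sub_dotProduct, dotProduct_sub,
      dotProduct_comm (Rᵀ *ᵥ (Fᵀ *ᵥ a)) (Xᵀ *ᵥ a)]
    ring
  have hnoise := transpose_mulVec_dotProduct_self_le hW a
  rw [hcross_symm, hcross, hdata] at h
  nlinarith [mul_nonneg hα (sub_nonneg.2 hnoise)]

lemma dotProduct_mulVec_mulVec_le_of_two_mul_le {ι : Type*} [Fintype ι] [DecidableEq ι]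
    {P D : Matrix ι ι ℝ} (hP : IsUnit P.det) {lam μ : ℝ} (hlam : 0 < lam)
    (h : ∀ a c, 2 * (a ⬝ᵥ D *ᵥ c) ≤ a ⬝ᵥ (lam • P⁻¹) *ᵥ a + c ⬝ᵥ (μ • P⁻¹) *ᵥ c)
    (x : ι → ℝ) :
    (D *ᵥ (P *ᵥ x)) ⬝ᵥ P *ᵥ (D *ᵥ (P *ᵥ x)) ≤ lam * μ * (x ⬝ᵥ P *ᵥ x) := by
  obtain ⟨z, hz⟩ : ∃ z, D *ᵥ (P *ᵥ x) = z := ⟨_, rfl⟩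
  have hinv (v : ι → ℝ) : P⁻¹ *ᵥ (P *ᵥ v) = v := by
    rw [mulVec_mulVec, nonsing_inv_mul P hP, one_mulVec]
  have hzx := h (lam⁻¹ • (P *ᵥ z)) (P *ᵥ x)
  simp only [smul_mulVec, mulVec_smul, hinv, hz, smul_dotProduct, dotProduct_smul, smul_eq_mul,
    dotProduct_comm (P *ᵥ _)] at hzx
  rw [← mul_assoc lam, mul_inv_cancel₀ hlam.ne', one_mul] at hzx
  rw [hz]
  calc z ⬝ᵥ P *ᵥ z = lam * (lam⁻¹ * (z ⬝ᵥ P *ᵥ z)) := (mul_inv_cancel_left₀ hlam.ne' _).symm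
    _ ≤ lam * (μ * (x ⬝ᵥ P *ᵥ x)) :=
      mul_le_mul_of_nonneg_left (by linarith) hlam.le
    _ = lam * μ * (x ⬝ᵥ P *ᵥ x) := (mul_assoc _ _ _).symm

lemma add_mulVec_eq_fromCols_mul_fromRows_mulVec {ι ρ₁ ρ₂ μ τ : Type*} [Fintype ι]
    [DecidableEq ι] [Fintype ρ₁] [Fintype ρ₂] [Fintype μ] [Fintype τ]
    (A : Matrix ι ρ₁ ℝ) (B : Matrix ι ρ₂ ℝ) (R : Matrix ρ₁ τ ℝ) (G : Matrix ρ₂ μ ℝ)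
    (U : Matrix μ τ ℝ) (H : Matrix τ ι ℝ) {L : Matrix ρ₁ ι ℝ} {P : Matrix ι ι ℝ}
    (hP : IsUnit P.det) (hH : R * H = L * P⁻¹) (x : ι → ℝ) :
    A *ᵥ (L *ᵥ x) + B *ᵥ (G *ᵥ ((U * H * P) *ᵥ x)) =
      (fromCols A B * (fromRows R (G * U) * H)) *ᵥ (P *ᵥ x) := by
  have hL : L = R * H * P := by rw [hH, Matrix.mul_assoc, nonsing_inv_mul P hP, Matrix.mul_one]
  rw [hL, fromRows_mul, fromCols_mul_fromRows]
  simp only [mulVec_mulVec, Matrix.add_mul, add_mulVec, Matrix.mul_assoc]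

theorem data_driven_RCBC_RSC_general
    (n N Nh m T : ℕ)
    (δ π lam γ₁ γ₂ : ℝ) (hπ : 0 < π)
    (hlam₀ : 0 < lam)
    (A : Matrix (Fin n) (Fin N) ℝ) (B : Matrix (Fin n) (Fin Nh) ℝ)
    (R₀T : Matrix (Fin N) (Fin T) ℝ) (G₀T : Matrix (Fin Nh) (Fin T) ℝ)
    (U₀T : Matrix (Fin m) (Fin T) ℝ) (W₀T X₁T : Matrix (Fin n) (Fin T) ℝ)
    (hdata : X₁T = A * R₀T + B * G₀T + W₀T)
    (hW : ∀ k : Fin T, (fun i => W₀T i k) ⬝ᵥ (fun i => W₀T i k) ≤ δ)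
    (P : Matrix (Fin n) (Fin n) ℝ) (hP : P.PosDef)
    (L : (Fin n → ℝ) → Matrix (Fin N) (Fin n) ℝ)
    (G : (Fin n → ℝ) → Matrix (Fin Nh) (Fin m) ℝ)
    (H : (Fin n → ℝ) → Matrix (Fin T) (Fin n) ℝ)
    (α : (Fin n → ℝ) → ℝ) (hα : ∀ x, 0 < α x)
    (hH : ∀ x : Fin n → ℝ, R₀T * H x = L x * P⁻¹)
    (X₀ X₁ : Set (Fin n → ℝ))
    (hX₀ : ∀ x ∈ X₀, x ⬝ᵥ P.mulVec x ≤ γ₁)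
    (hX₁ : ∀ x ∈ X₁, γ₂ ≤ x ⬝ᵥ P.mulVec x)
    (Rh : Matrix (Fin N ⊕ Fin Nh) (Fin T) ℝ) (hRh : Rh = fromRows R₀T G₀T)
    (hLMI : ∀ x : Fin n → ℝ, x ⬝ᵥ P.mulVec x < γ₂ →
      Matrix.NegSemidef
        (fromBlocks (-(lam • P⁻¹))
            (fromCols (0 : Matrix (Fin n) (Fin N ⊕ Fin Nh) ℝ)
              (0 : Matrix (Fin n) (Fin n) ℝ))
            (fromRows (0 : Matrix (Fin N ⊕ Fin Nh) (Fin n) ℝ)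
              (0 : Matrix (Fin n) (Fin n) ℝ))
            (fromBlocks (0 : Matrix (Fin N ⊕ Fin Nh) (Fin N ⊕ Fin Nh) ℝ)
              (fromRows R₀T (G x * U₀T) * H x) (fromRows R₀T (G x * U₀T) * H x)ᵀ
              (-((1 + π)⁻¹ • P⁻¹)))
          - α x •
          fromBlocks (X₁T * X₁Tᵀ - ((T : ℝ) * δ) • (1 : Matrix (Fin n) (Fin n) ℝ))
            (fromCols (-(X₁T * Rhᵀ)) (0 : Matrix (Fin n) (Fin n) ℝ))
            (fromRows (-(Rh * X₁Tᵀ)) (0 : Matrix (Fin n) (Fin n) ℝ))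
            (fromBlocks (Rh * Rhᵀ) (0 : Matrix (Fin N ⊕ Fin Nh) (Fin n) ℝ)
              (0 : Matrix (Fin n) (Fin N ⊕ Fin Nh) ℝ) (0 : Matrix (Fin n) (Fin n) ℝ)))) :
    (∀ x ∈ X₀, x ⬝ᵥ P.mulVec x ≤ γ₁) ∧
    (∀ x ∈ X₁, γ₂ ≤ x ⬝ᵥ P.mulVec x) ∧
    (∀ x : Fin n → ℝ, x ⬝ᵥ P.mulVec x < γ₂ →
      ∀ w : Fin n → ℝ, w ⬝ᵥ w ≤ δ →
        ((A.mulVec (L x |>.mulVec x)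
            + B.mulVec ((G x).mulVec ((U₀T * H x * P).mulVec x)) + w) ⬝ᵥ
          P.mulVec (A.mulVec (L x |>.mulVec x)
            + B.mulVec ((G x).mulVec ((U₀T * H x * P).mulVec x)) + w))
          ≤ lam * (x ⬝ᵥ P.mulVec x)
            + (1 + 1 / π) * l2OpNorm hP.posSemidef.sqrt ^ 2 * (w ⬝ᵥ w)) := by
  refine ⟨hX₀, hX₁, fun x hx w _ => ?_⟩
  have hdet : IsUnit P.det := isUnit_iff_ne_zero.2 hP.det_pos.ne'
  have hdata' : X₁T = fromCols A B * Rh + W₀T := by rw [hRh, fromCols_mul_fromRows, hdata]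
  have hcross := two_mul_dotProduct_mul_mulVec_le_of_negSemidef hdata' hW (hα x).le
    (by simpa only [Fintype.card_fin] using hLMI x hx)
  have hdecrease := dotProduct_mulVec_mulVec_le_of_two_mul_le hdet hlam₀ hcross x
  rw [add_mulVec_eq_fromCols_mul_fromRows_mulVec A B R₀T (G x) U₀T (H x) hdet (hH x)]
  calc _ ≤ (1 + π) * _ + (1 + 1 / π) * (w ⬝ᵥ P *ᵥ w) :=
        hP.posSemidef.dotProduct_mulVec_add_le hπ _ w
    _ ≤ (1 + π) * (lam * (1 + π)⁻¹ * (x ⬝ᵥ P *ᵥ x)) +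
        (1 + 1 / π) * (l2OpNorm hP.posSemidef.sqrt ^ 2 * (w ⬝ᵥ w)) := by
      gcongr
      exact hP.posSemidef.dotProduct_mulVec_le_l2OpNorm_sqrt_sq w
    _ = _ := by field_simp

/-- **Theorem 2 (data-driven R-CBC and R-SC).** Under the data-dependent conditions,
`B(x) = xᵀ P x` is a robust control barrier certificate with `ρ = (1 + 1/π) ‖√P‖²`:
`B ≤ γ₁` on `X₀`, `B ≥ γ₂` on `X₁`, and on `X̃ = {x : B(x) < γ₂}` the controller
`u(x) = U₀T H(x) P x` enforces `B(x⁺) ≤ λ B(x) + ρ wᵀw` for all `w` with `wᵀw ≤ δ`. -/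
theorem data_driven_RCBC_RSC
    (n N Nh m T : ℕ) (hn : 0 < n) (hN : 0 < N) (hNh : 0 < Nh) (hm : 0 < m) (hT : 0 < T)
    (δ π lam γ₁ γ₂ : ℝ) (hδ : 0 ≤ δ) (hπ : 0 < π)
    (hlam₀ : 0 < lam) (hlam₁ : lam ≤ 1) (hγ₁ : 0 < γ₁) (hγ : γ₁ < γ₂)
    (A : Matrix (Fin n) (Fin N) ℝ) (B : Matrix (Fin n) (Fin Nh) ℝ)
    (R₀T : Matrix (Fin N) (Fin T) ℝ) (G₀T : Matrix (Fin Nh) (Fin T) ℝ)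
    (U₀T : Matrix (Fin m) (Fin T) ℝ) (W₀T X₁T : Matrix (Fin n) (Fin T) ℝ)
    (hdata : X₁T = A * R₀T + B * G₀T + W₀T)
    (hW : ∀ k : Fin T, (fun i => W₀T i k) ⬝ᵥ (fun i => W₀T i k) ≤ δ)
    (P : Matrix (Fin n) (Fin n) ℝ) (hP : P.PosDef)
    (hρδ : (1 + 1 / π) * l2OpNorm hP.posSemidef.sqrt ^ 2 * δ ≤ γ₂ * (1 - lam))
    (L : (Fin n → ℝ) → Matrix (Fin N) (Fin n) ℝ)
    (G : (Fin n → ℝ) → Matrix (Fin Nh) (Fin m) ℝ)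
    (H : (Fin n → ℝ) → Matrix (Fin T) (Fin n) ℝ)
    (α : (Fin n → ℝ) → ℝ) (hα : ∀ x, 0 < α x)
    (hH : ∀ x : Fin n → ℝ, R₀T * H x = L x * P⁻¹)
    (X₀ X₁ : Set (Fin n → ℝ))
    (hX₀ : ∀ x ∈ X₀, x ⬝ᵥ P.mulVec x ≤ γ₁)
    (hX₁ : ∀ x ∈ X₁, γ₂ ≤ x ⬝ᵥ P.mulVec x)
    (Rh : Matrix (Fin N ⊕ Fin Nh) (Fin T) ℝ) (hRh : Rh = fromRows R₀T G₀T)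
    (hLMI : ∀ x : Fin n → ℝ, x ⬝ᵥ P.mulVec x < γ₂ →
      Matrix.NegSemidef
        (fromBlocks (-(lam • P⁻¹))
            (fromCols (0 : Matrix (Fin n) (Fin N ⊕ Fin Nh) ℝ)
              (0 : Matrix (Fin n) (Fin n) ℝ))
            (fromRows (0 : Matrix (Fin N ⊕ Fin Nh) (Fin n) ℝ)
              (0 : Matrix (Fin n) (Fin n) ℝ))
            (fromBlocks (0 : Matrix (Fin N ⊕ Fin Nh) (Fin N ⊕ Fin Nh) ℝ)
              (fromRows R₀T (G x * U₀T) * H x) (fromRows R₀T (G x * U₀T) * H x)ᵀ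
              (-((1 + π)⁻¹ • P⁻¹)))
          - α x •
          fromBlocks (X₁T * X₁Tᵀ - ((T : ℝ) * δ) • (1 : Matrix (Fin n) (Fin n) ℝ))
            (fromCols (-(X₁T * Rhᵀ)) (0 : Matrix (Fin n) (Fin n) ℝ))
            (fromRows (-(Rh * X₁Tᵀ)) (0 : Matrix (Fin n) (Fin n) ℝ))
            (fromBlocks (Rh * Rhᵀ) (0 : Matrix (Fin N ⊕ Fin Nh) (Fin n) ℝ)
              (0 : Matrix (Fin n) (Fin N ⊕ Fin Nh) ℝ) (0 : Matrix (Fin n) (Fin n) ℝ)))) :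
    (∀ x ∈ X₀, x ⬝ᵥ P.mulVec x ≤ γ₁) ∧
    (∀ x ∈ X₁, γ₂ ≤ x ⬝ᵥ P.mulVec x) ∧
    (∀ x : Fin n → ℝ, x ⬝ᵥ P.mulVec x < γ₂ →
      ∀ w : Fin n → ℝ, w ⬝ᵥ w ≤ δ →
        ((A.mulVec (L x |>.mulVec x)
            + B.mulVec ((G x).mulVec ((U₀T * H x * P).mulVec x)) + w) ⬝ᵥ
          P.mulVec (A.mulVec (L x |>.mulVec x)
            + B.mulVec ((G x).mulVec ((U₀T * H x * P).mulVec x)) + w))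
          ≤ lam * (x ⬝ᵥ P.mulVec x)
            + (1 + 1 / π) * l2OpNorm hP.posSemidef.sqrt ^ 2 * (w ⬝ᵥ w)) :=
  data_driven_RCBC_RSC_general n N Nh m T δ π lam γ₁ γ₂ hπ hlam₀ A B R₀T G₀T U₀T W₀T X₁T hdata hW P
    hP L G H α hα hH X₀ X₁ hX₀ hX₁ Rh hRh hLMI
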